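/- arXiv:2511.14151 — 3 statements merged into one kernel-verified Lean document; each statement's English description precedes it below -/
import Mathlib

section
/- Let d, n ≥ 1, σ > 0, and let A : I → ℝ^{d×d} be continuous on an open interval I ⊆ ℝ with A(t) skew-symmetric for every t. Suppose q_i, p_i : I → ℝ^d (i = 1,…,n) are differentiable and satisfy the rotation-coupled landmark Hamiltonian equations q_i'(t) = A(t) q_i(t) + ∑_{j=1}^n exp(−‖q_i(t) − q_j(t)‖²/(2σ²)) p_j(t) and p_i'(t) = A(t) p_i(t) + (1/σ²) ∑_{j=1}^n exp(−‖q_i(t) − q_j(t)‖²/(2σ²)) ⟨p_i(t), p_j(t)⟩ (q_i(t) − q_j(t)). If the total linear momentum ∑_{i=1}^n p_i vanishes at some t₀ ∈ I, then ∑_{i=1}^n p_i(t) = 0 for all t ∈ I. -/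
/-!
Summing the momentum equations over `i`, the interaction forces cancel in pairs (the weight
`exp(-‖qᵢ - qⱼ‖²/2σ²) ⟨pᵢ, pⱼ⟩` is symmetric in `i, j` while `qᵢ - qⱼ` is antisymmetric), so the
total momentum `S = ∑ᵢ pᵢ` solves `S' = A S`. Skew-symmetry of `A` makes `‖S‖²` constant, hence
`S` vanishes on the whole interval once it vanishes at `t₀`.
-/

open Matrix

theorem Finset.sum_sum_eq_zero_of_antisymm {ι M : Type*} [Fintype ι] [AddCommGroup M]
    [IsAddTorsionFree M] {f : ι → ι → M} (hf : ∀ i j, f i j = -f j i) :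
    ∑ i, ∑ j, f i j = 0 := by
  refine self_eq_neg.mp ?_
  simp only [← Finset.sum_neg_distrib, ← hf]
  exact Finset.sum_comm

theorem Finset.sum_sum_smul_sub_eq_zero_of_symm {ι R M : Type*} [Fintype ι] [Ring R]
    [AddCommGroup M] [Module R M] [IsAddTorsionFree M] {w : ι → ι → R}
    (hw : ∀ i j, w i j = w j i) (x : ι → M) :
    ∑ i, ∑ j, w i j • (x i - x j) = 0 :=
  Finset.sum_sum_eq_zero_of_antisymm fun i j => by rw [hw, ← smul_neg, neg_sub]

theorem Matrix.dotProduct_mulVec_self_eq_zero_of_transpose_eq_neg {m R : Type*} [Fintype m]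
    [CommRing R] [IsAddTorsionFree R] {A : Matrix m m R} (hA : Aᵀ = -A) (v : m → R) :
    v ⬝ᵥ A *ᵥ v = 0 := by
  refine self_eq_neg.mp ?_
  calc v ⬝ᵥ A *ᵥ v = Aᵀ *ᵥ v ⬝ᵥ v := by rw [dotProduct_mulVec, mulVec_transpose]
    _ = -(v ⬝ᵥ A *ᵥ v) := by rw [hA, neg_mulVec, neg_dotProduct, dotProduct_comm]

theorem HasDerivAt.dotProduct {𝕜 m : Type*} [NontriviallyNormedField 𝕜] [Fintype m]
    {f g : 𝕜 → m → 𝕜} {f' g' : m → 𝕜} {t : 𝕜} (hf : HasDerivAt f f' t)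
    (hg : HasDerivAt g g' t) :
    HasDerivAt (fun s => f s ⬝ᵥ g s) (f' ⬝ᵥ g t + f t ⬝ᵥ g') t := by
  have hterm : ∀ k ∈ Finset.univ, HasDerivAt (fun s => f s k * g s k)
      (f' k * g t k + f t k * g' k) t :=
    fun k _ => (hasDerivAt_pi.mp hf k).mul (hasDerivAt_pi.mp hg k)
  exact (HasDerivAt.fun_sum hterm).congr_deriv Finset.sum_add_distrib

theorem eq_zero_of_hasDerivAt_skew_mulVec {m : Type*} [Fintype m] {s : Set ℝ}
    (hs : IsOpen s) (hs' : IsPreconnected s) {A : ℝ → Matrix m m ℝ}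
    (hA : ∀ t ∈ s, (A t)ᵀ = -A t) {S : ℝ → m → ℝ}
    (hS : ∀ t ∈ s, HasDerivAt S (A t *ᵥ S t) t) {t₀ : ℝ} (ht₀ : t₀ ∈ s) (h0 : S t₀ = 0) :
    ∀ t ∈ s, S t = 0 := by
  have hnormSq : ∀ t ∈ s, HasDerivAt (fun u => S u ⬝ᵥ S u) 0 t := fun t ht => by
    refine ((hS t ht).dotProduct (hS t ht)).congr_deriv ?_
    rw [dotProduct_comm, dotProduct_mulVec_self_eq_zero_of_transpose_eq_neg (hA t ht),
      add_zero]
  intro t ht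
  have hconst : S t ⬝ᵥ S t = S t₀ ⬝ᵥ S t₀ :=
    hs.is_const_of_deriv_eq_zero hs'
      (fun u hu => (hnormSq u hu).differentiableAt.differentiableWithinAt)
      (fun u hu => (hnormSq u hu).deriv) ht ht₀
  rwa [h0, dotProduct_zero, dotProduct_self_eq_zero] at hconst

theorem hasDerivAt_sum_of_symm_pair_forces {ι m : Type*} [Fintype ι] [Fintype m]
    {A : Matrix m m ℝ} {c : ℝ} {w : ι → ι → ℝ} (hw : ∀ i j, w i j = w j i)
    {x : ι → m → ℝ} {p : ι → ℝ → m → ℝ} {t : ℝ}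
    (hp : ∀ i, HasDerivAt (p i) (A *ᵥ p i t + c • ∑ j, w i j • (x i - x j)) t) :
    HasDerivAt (fun s => ∑ i, p i s) (A *ᵥ ∑ i, p i t) t := by
  refine (HasDerivAt.fun_sum (u := Finset.univ) fun i _ => hp i).congr_deriv ?_
  rw [Finset.sum_add_distrib, ← Finset.smul_sum,
    Finset.sum_sum_smul_sub_eq_zero_of_symm hw, smul_zero, add_zero, mulVec_sum]

theorem translation_momentum_zero_preserved_general {d n : ℕ}
    (σ : ℝ) (a b : ℝ)
    (A : ℝ → Matrix (Fin d) (Fin d) ℝ)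
    (hAskew : ∀ t ∈ Set.Ioo a b, (A t).transpose = -(A t))
    (q p : Fin n → ℝ → (Fin d → ℝ))
    (hp : ∀ t ∈ Set.Ioo a b, ∀ i, HasDerivAt (p i)
      ((A t).mulVec (p i t) + (1 / σ ^ 2) • ∑ j,
        (Real.exp (-((q i t - q j t) ⬝ᵥ (q i t - q j t)) / (2 * σ ^ 2))
          * (p i t ⬝ᵥ p j t)) • (q i t - q j t)) t)
    (t₀ : ℝ) (ht₀ : t₀ ∈ Set.Ioo a b) (h0 : ∑ i, p i t₀ = 0) :
    ∀ t ∈ Set.Ioo a b, ∑ i, p i t = 0 := by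
  have hweight_symm : ∀ t i j,
      Real.exp (-((q i t - q j t) ⬝ᵥ (q i t - q j t)) / (2 * σ ^ 2)) * (p i t ⬝ᵥ p j t)
        = Real.exp (-((q j t - q i t) ⬝ᵥ (q j t - q i t)) / (2 * σ ^ 2))
          * (p j t ⬝ᵥ p i t) := fun t i j => by
    rw [← neg_sub (q j t), neg_dotProduct, dotProduct_neg, neg_neg, dotProduct_comm (p i t)]
  have hS : ∀ t ∈ Set.Ioo a b, HasDerivAt (fun s => ∑ i, p i s) (A t *ᵥ ∑ i, p i t) t :=
    fun t ht => hasDerivAt_sum_of_symm_pair_forces (hweight_symm t) (hp t ht)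
  exact eq_zero_of_hasDerivAt_skew_mulVec isOpen_Ioo isPreconnected_Ioo hAskew hS ht₀ h0

/-- The zero level set of the translation momentum map `μ_τ(q,p) = ∑ᵢ pᵢ` is preserved by the
rotation-coupled landmark Hamiltonian flow: if `∑ᵢ pᵢ` vanishes at some `t₀`, it vanishes
for all times. -/
theorem translation_momentum_zero_preserved {d n : ℕ} (hd : 1 ≤ d) (hn : 1 ≤ n)
    (σ : ℝ) (hσ : 0 < σ) (a b : ℝ)
    (A : ℝ → Matrix (Fin d) (Fin d) ℝ)
    (hAcont : ContinuousOn A (Set.Ioo a b))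
    (hAskew : ∀ t ∈ Set.Ioo a b, (A t).transpose = -(A t))
    (q p : Fin n → ℝ → (Fin d → ℝ))
    (hq : ∀ t ∈ Set.Ioo a b, ∀ i, HasDerivAt (q i)
      ((A t).mulVec (q i t) +
        ∑ j, Real.exp (-((q i t - q j t) ⬝ᵥ (q i t - q j t)) / (2 * σ ^ 2)) • p j t) t)
    (hp : ∀ t ∈ Set.Ioo a b, ∀ i, HasDerivAt (p i)
      ((A t).mulVec (p i t) + (1 / σ ^ 2) • ∑ j,
        (Real.exp (-((q i t - q j t) ⬝ᵥ (q i t - q j t)) / (2 * σ ^ 2))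
          * (p i t ⬝ᵥ p j t)) • (q i t - q j t)) t)
    (t₀ : ℝ) (ht₀ : t₀ ∈ Set.Ioo a b) (h0 : ∑ i, p i t₀ = 0) :
    ∀ t ∈ Set.Ioo a b, ∑ i, p i t = 0 :=
  translation_momentum_zero_preserved_general σ a b A hAskew q p hp t₀ ht₀ h0
end

section
/- Let d, n ≥ 1, σ > 0, and let A : I → ℝ^{d×d} be continuous on an open interval I ⊆ ℝ with A(t) skew-symmetric for every t. Suppose q_i, p_i : I → ℝ^d (i = 1,…,n) are differentiable and satisfy q_i'(t) = A(t) q_i(t) + ∑_{j=1}^n exp(−‖q_i(t) − q_j(t)‖²/(2σ²)) p_j(t) and p_i'(t) = A(t) p_i(t) + (1/σ²) ∑_{j=1}^n exp(−‖q_i(t) − q_j(t)‖²/(2σ²)) ⟨p_i(t), p_j(t)⟩ (q_i(t) − q_j(t)). If the angular momentum matrix M(t) = ∑_{i=1}^n ( p_i(t) q_i(t)ᵀ − q_i(t) p_i(t)ᵀ ) vanishes at some t₀ ∈ I, then M(t) = 0 for all t ∈ I. -/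
/-!
Along the flow the angular momentum `M = ∑ᵢ (pᵢ qᵢᵀ - qᵢ pᵢᵀ)` satisfies the linear equation
`M' = ⁅A, M⁆`. The rotation terms contribute `A M + M Aᵀ`, which is `⁅A, M⁆` because `A` is
skew-symmetric; the kernel terms cancel in pairs, because the Gaussian weights and the weights
`exp(-‖qᵢ - qⱼ‖²/2σ²) ⟨pᵢ, pⱼ⟩` are symmetric in `i, j`. A linear equation with continuous
coefficients has unique solutions, so `M(t₀) = 0` forces `M ≡ 0`.
-/

open Matrix Set

theorem eqOn_zero_of_hasDerivAt_clm_apply {E : Type*} [NormedAddCommGroup E] [NormedSpace ℝ E]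
    {L : ℝ → E →L[ℝ] E} {f : ℝ → E} {a b t₀ : ℝ} (hL : ContinuousOn L (Ioo a b))
    (hf : ∀ t ∈ Ioo a b, HasDerivAt f (L t (f t)) t) (ht₀ : t₀ ∈ Ioo a b) (hf₀ : f t₀ = 0) :
    EqOn f 0 (Ioo a b) := by
  intro t ht
  obtain ⟨u, hau, hu⟩ := exists_between (lt_min ht₀.1 ht.1)
  obtain ⟨w, hw, hwb⟩ := exists_between (max_lt ht₀.2 ht.2)
  have hsub : Icc u w ⊆ Ioo a b := Icc_subset_Ioo hau hwb
  obtain ⟨C, hC⟩ := isCompact_Icc.exists_bound_of_continuousOn (hL.mono hsub)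
  have hlip : ∀ s ∈ Ioo u w, LipschitzOnWith C.toNNReal (L s) univ := fun s hs =>
    ((L s).lipschitz.weaken (by
      rw [← NNReal.coe_le_coe, Real.coe_toNNReal', coe_nnnorm]
      exact le_max_of_le_left (hC s (Ioo_subset_Icc_self hs)))).lipschitzOnWith
  refine ODE_solution_unique_of_mem_Ioo hlip (t₀ := t₀)
    ⟨(min_le_left _ _).trans_lt' hu, (le_max_left _ _).trans_lt hw⟩
    (fun s hs => ⟨hf s (hsub (Ioo_subset_Icc_self hs)), trivial⟩)
    (fun s _ => ⟨by simp, trivial⟩) hf₀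
    ⟨(min_le_right _ _).trans_lt' hu, (le_max_right _ _).trans_lt hw⟩

section Algebra

variable {ι m R : Type*} [Fintype ι] [CommRing R]

def angularMomentum (q p : ι → m → R) : Matrix m m R :=
  ∑ i, (vecMulVec (p i) (q i) - vecMulVec (q i) (p i))

theorem Matrix.vecMulVec_sum (u : m → R) (v : ι → m → R) :
    vecMulVec u (∑ j, v j) = ∑ j, vecMulVec u (v j) :=
  map_sum (vecMulVecBilin R R u) v _

theorem Matrix.sum_vecMulVec (u : ι → m → R) (v : m → R) :
    vecMulVec (∑ j, u j) v = ∑ j, vecMulVec (u j) v := by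
  simp_rw [← vecMulVecBilin_apply_apply (R := R) (S := R), map_sum, LinearMap.sum_apply]

theorem Finset.sum_sum_smul_sub_swap_eq_zero {M : Type*} [AddCommGroup M] [Module R M]
    {g : ι → ι → R} (hg : ∀ i j, g i j = g j i) (F : ι → ι → M) :
    ∑ i, ∑ j, g i j • (F i j - F j i) = 0 := by
  simp_rw [smul_sub, Finset.sum_sub_distrib]
  rw [Finset.sum_comm (f := fun i j => g i j • F j i)]
  simp_rw [hg, sub_self]

theorem angularMomentum_add_left (q q' p : ι → m → R) :
    angularMomentum (fun i => q i + q' i) p = angularMomentum q p + angularMomentum q' p := by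
  simp only [angularMomentum, vecMulVec_add, add_vecMulVec, ← Finset.sum_add_distrib]
  exact Finset.sum_congr rfl fun i _ => by abel

theorem angularMomentum_add_right (q p p' : ι → m → R) :
    angularMomentum q (fun i => p i + p' i) = angularMomentum q p + angularMomentum q p' := by
  simp only [angularMomentum, vecMulVec_add, add_vecMulVec, ← Finset.sum_add_distrib]
  exact Finset.sum_congr rfl fun i _ => by abel

theorem angularMomentum_smul_right (q p : ι → m → R) (c : R) :
    angularMomentum q (fun i => c • p i) = c • angularMomentum q p := by
  simp only [angularMomentum, vecMulVec_smul, smul_vecMulVec, ← smul_sub, Finset.smul_sum]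

theorem angularMomentum_mulVec_add_mulVec [Fintype m] (A : Matrix m m R) (q p : ι → m → R) :
    angularMomentum (fun i => A *ᵥ q i) p + angularMomentum q (fun i => A *ᵥ p i) =
      A * angularMomentum q p + angularMomentum q p * Aᵀ := by
  simp only [angularMomentum, ← mul_vecMulVec]
  simp only [← vecMul_transpose, ← vecMulVec_mul, Finset.mul_sum, Finset.sum_mul,
    ← Finset.sum_add_distrib]
  exact Finset.sum_congr rfl fun i _ => by noncomm_ring

theorem angularMomentum_sum_smul_left_eq_zero {e : ι → ι → R} (he : ∀ i j, e i j = e j i)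
    (p : ι → m → R) : angularMomentum (fun i => ∑ j, e i j • p j) p = 0 := by
  simp only [angularMomentum, vecMulVec_sum, sum_vecMulVec, vecMulVec_smul, smul_vecMulVec,
    ← Finset.sum_sub_distrib, ← smul_sub]
  exact Finset.sum_sum_smul_sub_swap_eq_zero he _

theorem angularMomentum_sum_smul_sub_right_eq_zero {g : ι → ι → R} (hg : ∀ i j, g i j = g j i)
    (q : ι → m → R) : angularMomentum q (fun i => ∑ j, g i j • (q i - q j)) = 0 := by
  simp only [angularMomentum, vecMulVec_sum, sum_vecMulVec, vecMulVec_smul, smul_vecMulVec,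
    vecMulVec_sub, sub_vecMulVec, ← Finset.sum_sub_distrib, ← smul_sub, sub_sub_sub_cancel_left]
  exact Finset.sum_sum_smul_sub_swap_eq_zero hg _

theorem angularMomentum_landmark_field [Fintype m] {A : Matrix m m R} (hA : Aᵀ = -A)
    {e g : ι → ι → R} (he : ∀ i j, e i j = e j i) (hg : ∀ i j, g i j = g j i) (c : R)
    (q p : ι → m → R) :
    angularMomentum (fun i => A *ᵥ q i + ∑ j, e i j • p j) p +
        angularMomentum q (fun i => A *ᵥ p i + c • ∑ j, g i j • (q i - q j)) =
      ⁅A, angularMomentum q p⁆ := by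
  rw [angularMomentum_add_left, angularMomentum_add_right, angularMomentum_smul_right,
    angularMomentum_sum_smul_left_eq_zero he, angularMomentum_sum_smul_sub_right_eq_zero hg,
    smul_zero, add_zero, add_zero, angularMomentum_mulVec_add_mulVec, hA, Matrix.mul_neg,
    Ring.lie_def, sub_eq_add_neg]

end Algebra

section Analysis

attribute [local instance] Matrix.normedAddCommGroup Matrix.normedSpace

theorem HasDerivAt.vecMulVec {𝕜 m n : Type*} [NontriviallyNormedField 𝕜] [Fintype m]
    [Fintype n] {u : 𝕜 → m → 𝕜} {v : 𝕜 → n → 𝕜} {u' : m → 𝕜} {v' : n → 𝕜} {t : 𝕜}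
    (hu : HasDerivAt u u' t) (hv : HasDerivAt v v' t) :
    HasDerivAt (fun s => vecMulVec (u s) (v s)) (vecMulVec u' (v t) + vecMulVec (u t) v') t := by
  refine hasDerivAt_pi.mpr fun a => hasDerivAt_pi.mpr fun b => ?_
  simpa [vecMulVec_apply] using (hasDerivAt_pi.mp hu a).fun_mul (hasDerivAt_pi.mp hv b)

theorem hasDerivAt_angularMomentum {𝕜 ι m : Type*} [NontriviallyNormedField 𝕜] [Fintype ι]
    [Fintype m] {q p : ι → 𝕜 → m → 𝕜} {q' p' : ι → m → 𝕜} {t : 𝕜}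
    (hq : ∀ i, HasDerivAt (q i) (q' i) t) (hp : ∀ i, HasDerivAt (p i) (p' i) t) :
    HasDerivAt (fun s => angularMomentum (q · s) (p · s))
      (angularMomentum q' (p · t) + angularMomentum (q · t) p') t := by
  refine (HasDerivAt.fun_sum (u := Finset.univ) fun i _ =>
    ((hp i).vecMulVec (hq i)).fun_sub ((hq i).vecMulVec (hp i))).congr_deriv ?_
  simp only [angularMomentum, ← Finset.sum_add_distrib]
  exact Finset.sum_congr rfl fun i _ => by abel

theorem Matrix.eqOn_zero_of_hasDerivAt_lie {m : Type*} [Fintype m] [DecidableEq m]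
    {A M : ℝ → Matrix m m ℝ} {a b t₀ : ℝ} (hA : ContinuousOn A (Ioo a b))
    (hM : ∀ t ∈ Ioo a b, HasDerivAt M ⁅A t, M t⁆ t)
    (ht₀ : t₀ ∈ Ioo a b) (hM₀ : M t₀ = 0) : EqOn M 0 (Ioo a b) := by
  refine eqOn_zero_of_hasDerivAt_clm_apply
    (L := fun t => (LinearMap.mulLeft ℝ (A t) - LinearMap.mulRight ℝ (A t)).toContinuousLinearMap)
    ?_ (fun t ht => (hM t ht).congr_deriv (Ring.lie_def _ _)) ht₀ hM₀
  refine continuousOn_clm_apply.mpr fun X => ?_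
  exact ((hA.mul continuousOn_const).sub (continuousOn_const.mul hA)).congr fun t _ => rfl

end Analysis

theorem rotation_momentum_zero_preserved_general {d n : ℕ}
    (σ : ℝ) (a b : ℝ)
    (A : ℝ → Matrix (Fin d) (Fin d) ℝ)
    (hAcont : ContinuousOn A (Set.Ioo a b))
    (hAskew : ∀ t ∈ Set.Ioo a b, (A t).transpose = -(A t))
    (q p : Fin n → ℝ → (Fin d → ℝ))
    (hq : ∀ t ∈ Set.Ioo a b, ∀ i, HasDerivAt (q i)
      ((A t).mulVec (q i t) +
        ∑ j, Real.exp (-((q i t - q j t) ⬝ᵥ (q i t - q j t)) / (2 * σ ^ 2)) • p j t) t)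
    (hp : ∀ t ∈ Set.Ioo a b, ∀ i, HasDerivAt (p i)
      ((A t).mulVec (p i t) + (1 / σ ^ 2) • ∑ j,
        (Real.exp (-((q i t - q j t) ⬝ᵥ (q i t - q j t)) / (2 * σ ^ 2))
          * (p i t ⬝ᵥ p j t)) • (q i t - q j t)) t)
    (t₀ : ℝ) (ht₀ : t₀ ∈ Set.Ioo a b)
    (h0 : (∑ i, (vecMulVec (p i t₀) (q i t₀) - vecMulVec (q i t₀) (p i t₀))) = 0) :
    ∀ t ∈ Set.Ioo a b,
      (∑ i, (vecMulVec (p i t) (q i t) - vecMulVec (q i t) (p i t))) = 0 := by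
  set e : ℝ → Fin n → Fin n → ℝ := fun t i j =>
    Real.exp (-((q i t - q j t) ⬝ᵥ (q i t - q j t)) / (2 * σ ^ 2))
  have he : ∀ t i j, e t i j = e t j i := fun t i j => by
    simp only [e, ← neg_sub (q i t), neg_dotProduct, dotProduct_neg, neg_neg]
  have hM : ∀ t ∈ Ioo a b, HasDerivAt (fun s => angularMomentum (q · s) (p · s))
      ⁅A t, angularMomentum (q · t) (p · t)⁆ t := fun t ht => by
    rw [← angularMomentum_landmark_field (hAskew t ht) (he t)
      (g := fun i j => e t i j * (p i t ⬝ᵥ p j t)) (fun i j => by rw [he, dotProduct_comm])]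
    exact hasDerivAt_angularMomentum (hq t ht) (hp t ht)
  exact Matrix.eqOn_zero_of_hasDerivAt_lie hAcont hM ht₀ h0

/-- The zero level set of the rotation momentum map `μ_A(q,p) = ∑ᵢ (pᵢ qᵢᵀ − qᵢ pᵢᵀ)` is
preserved by the rotation-coupled landmark Hamiltonian flow: if the angular momentum matrix
vanishes at some `t₀`, it vanishes for all times. -/
theorem rotation_momentum_zero_preserved {d n : ℕ} (hd : 1 ≤ d) (hn : 1 ≤ n)
    (σ : ℝ) (hσ : 0 < σ) (a b : ℝ)
    (A : ℝ → Matrix (Fin d) (Fin d) ℝ)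
    (hAcont : ContinuousOn A (Set.Ioo a b))
    (hAskew : ∀ t ∈ Set.Ioo a b, (A t).transpose = -(A t))
    (q p : Fin n → ℝ → (Fin d → ℝ))
    (hq : ∀ t ∈ Set.Ioo a b, ∀ i, HasDerivAt (q i)
      ((A t).mulVec (q i t) +
        ∑ j, Real.exp (-((q i t - q j t) ⬝ᵥ (q i t - q j t)) / (2 * σ ^ 2)) • p j t) t)
    (hp : ∀ t ∈ Set.Ioo a b, ∀ i, HasDerivAt (p i)
      ((A t).mulVec (p i t) + (1 / σ ^ 2) • ∑ j,
        (Real.exp (-((q i t - q j t) ⬝ᵥ (q i t - q j t)) / (2 * σ ^ 2))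
          * (p i t ⬝ᵥ p j t)) • (q i t - q j t)) t)
    (t₀ : ℝ) (ht₀ : t₀ ∈ Set.Ioo a b)
    (h0 : (∑ i, (vecMulVec (p i t₀) (q i t₀) - vecMulVec (q i t₀) (p i t₀))) = 0) :
    ∀ t ∈ Set.Ioo a b,
      (∑ i, (vecMulVec (p i t) (q i t) - vecMulVec (q i t) (p i t))) = 0 :=
  rotation_momentum_zero_preserved_general σ a b A hAcont hAskew q p hq hp t₀ ht₀ h0
end

section
/- Let d, n ≥ 1. Define, for a symmetric positive definite d×d real matrix Σ and points q_1,…,q_n ∈ ℝ^d and covectors p_1,…,p_n ∈ ℝ^d, the anisotropic landmark Hamiltonian H(Σ, q, p) = (1/2) ∑_{i,j=1}^n exp(−(1/2)(q_i−q_j)ᵀΣ⁻¹(q_i−q_j)) p_iᵀ Σ p_j. Then H is invariant under the action of α-Isom(ℝ^d): for every α > 0, R ∈ SO(d) and T ∈ ℝ^d, H( α² R Σ Rᵀ, (α R q_i + T)_i, (α⁻¹ R p_i)_i ) = H(Σ, q, p). -/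
open Matrix

lemma conj_dot {d : ℕ} (R A : Matrix (Fin d) (Fin d) ℝ) (hR : R.transpose * R = 1)
    (u v : Fin d → ℝ) :
    R.mulVec u ⬝ᵥ (R * A * R.transpose).mulVec (R.mulVec v) = u ⬝ᵥ A.mulVec v := by
  rw [mulVec_mulVec, Matrix.mul_assoc (R*A), hR, Matrix.mul_one,
    ← vecMul_transpose, dotProduct_mulVec, vecMul_vecMul, ← Matrix.mul_assoc, hR,
    Matrix.one_mul, ← dotProduct_mulVec]

/-- The anisotropic landmark Hamiltonian associated to a metric `S` (denoted `Σ` in the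
paper): `H(Σ,q,p) = (1/2) ∑_{i,j} exp(−(1/2)(qᵢ−qⱼ)ᵀΣ⁻¹(qᵢ−qⱼ)) pᵢᵀ Σ pⱼ`. -/
noncomputable def anisoH {d n : ℕ} (S : Matrix (Fin d) (Fin d) ℝ)
    (q p : Fin n → (Fin d → ℝ)) : ℝ :=
  (1 / 2) * ∑ i, ∑ j,
    Real.exp (-(1 / 2) * ((q i - q j) ⬝ᵥ S⁻¹.mulVec (q i - q j)))
      * (p i ⬝ᵥ S.mulVec (p j))

/-- Invariance of the anisotropic landmark Hamiltonian under the action of `α-Isom(ℝ^d)`: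
`H(α²RΣRᵀ, (αRqᵢ + T)ᵢ, (α⁻¹Rpᵢ)ᵢ) = H(Σ, q, p)`. -/
theorem anisoH_invariant {d n : ℕ} (hd : 1 ≤ d) (hn : 1 ≤ n)
    (S : Matrix (Fin d) (Fin d) ℝ) (hS : S.PosDef)
    (α : ℝ) (hα : 0 < α)
    (R : Matrix (Fin d) (Fin d) ℝ) (hR : R.transpose * R = 1) (hRdet : R.det = 1)
    (T : Fin d → ℝ) (q p : Fin n → (Fin d → ℝ)) :
    anisoH ((α ^ 2) • (R * S * R.transpose))
        (fun i => α • R.mulVec (q i) + T) (fun i => α⁻¹ • R.mulVec (p i))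
      = anisoH S q p := by
  have hα2 : (α ^ 2 : ℝ) ≠ 0 := by positivity
  have hRR : R * R.transpose = 1 := mul_eq_one_comm.mp hR
  have hSdet : IsUnit S.det := isUnit_iff_ne_zero.mpr hS.det_pos.ne'
  have hinv : ((α ^ 2) • (R * S * R.transpose))⁻¹
      = (α ^ 2)⁻¹ • (R * S⁻¹ * R.transpose) := by
    apply Matrix.inv_eq_right_inv
    rw [Matrix.smul_mul, Matrix.mul_smul, smul_smul, mul_inv_cancel₀ hα2, one_smul]
    calc R * S * Rᵀ * (R * S⁻¹ * Rᵀ)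
        = R * (S * ((Rᵀ * R) * (S⁻¹ * Rᵀ))) := by simp only [Matrix.mul_assoc]
      _ = 1 := by rw [hR, Matrix.one_mul, ← Matrix.mul_assoc S S⁻¹ Rᵀ,
            Matrix.mul_nonsing_inv S hSdet, Matrix.one_mul, hRR]
  unfold anisoH
  congr 1
  apply Finset.sum_congr rfl; intro i _
  apply Finset.sum_congr rfl; intro j _
  have hq : (α • R.mulVec (q i) + T) - (α • R.mulVec (q j) + T)
      = α • R.mulVec (q i - q j) := by
    rw [add_sub_add_right_eq_sub, mulVec_sub, smul_sub]
  rw [hinv, hq]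
  congr 1
  · congr 1
    rw [smul_dotProduct, Matrix.mulVec_smul, dotProduct_smul, Matrix.smul_mulVec,
      dotProduct_smul, conj_dot R S⁻¹ hR, smul_eq_mul, smul_eq_mul, smul_eq_mul]
    field_simp
  · rw [smul_dotProduct, Matrix.mulVec_smul, dotProduct_smul, Matrix.smul_mulVec,
      dotProduct_smul, conj_dot R S hR, smul_eq_mul, smul_eq_mul, smul_eq_mul]
    field_simp
end
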